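/- Let P be a field and H₁, H₂ commutative P-algebras. Then H₁ and H₂ are geometrically equivalent if and only if LSC(H₁) = LSC(H₂), i.e., for every commutative P-algebra B (in a universe containing that of P, H₁ and H₂): every finitely generated P-subalgebra of B embeds into some power of H₁ if and only if every finitely generated P-subalgebra of B embeds into some power of H₂. -/

import Mathlib

/-!
An ideal `I` of `P[X₁, …, Xₙ]` is the kernel of a map into a power of `H` exactly when it is
`H`-closed, `I''_H = I`: the closure `T''_H` is the kernel of evaluation at all `H`-points of the
zero set of `T`. Hence a finitely generated algebra `A = P[X]/I` embeds into a power of `H` iff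
`I''_H = I`, so geometrically equivalent algebras have the same finitely generated subalgebras
of their powers, i.e. the same `LSC`. Conversely `P[X]/T''_{H₂}` lies in `LSC(H₂)`, hence in
`LSC(H₁)`, and so `T''_{H₁} ⊆ (T''_{H₂})''_{H₁} = T''_{H₂}`.
-/

open MvPolynomial

universe u v w

/-- The `H`-closure `T''_H` of a set `T` of polynomials. -/
def hClosure (P : Type u) [Field P] (H : Type v) [CommRing H] [Algebra P H]
    (n : ℕ) (T : Set (MvPolynomial (Fin n) P)) : Set (MvPolynomial (Fin n) P) :=
  {f | ∀ μ : Fin n → H, (∀ g ∈ T, aeval μ g = 0) → aeval μ f = 0}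

/-- `H₁` and `H₂` are geometrically equivalent: all closure operators coincide. -/
def GeomEquiv (P : Type u) [Field P] (H₁ : Type v) [CommRing H₁] [Algebra P H₁]
    (H₂ : Type w) [CommRing H₂] [Algebra P H₂] : Prop :=
  ∀ (n : ℕ) (T : Set (MvPolynomial (Fin n) P)),
    hClosure P H₁ n T = hClosure P H₂ n T

/-- `B ∈ LSC(H)`: every finitely generated `P`-subalgebra of `B` embeds into
some power of `H`. -/
def MemLSC (P : Type u) [Field P] (H : Type v) [CommRing H] [Algebra P H]
    (B : Type (max u v w)) [CommRing B] [Algebra P B] : Prop :=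
  ∀ S : Subalgebra P B, S.FG →
    ∃ (J : Type (max u v w)) (g : S →ₐ[P] (J → H)), Function.Injective g

universe j r

def EmbedsInPower (P : Type u) [Field P] (H : Type v) [CommRing H] [Algebra P H]
    (A : Type*) [CommRing A] [Algebra P A] : Prop :=
  ∃ (J : Type j) (g : A →ₐ[P] (J → H)), Function.Injective g

section EmbedsInPower

variable {P : Type u} [Field P] {H : Type v} [CommRing H] [Algebra P H]

theorem EmbedsInPower.ulift {A : Type*} [CommRing A] [Algebra P A]
    (h : EmbedsInPower.{u, v, j} P H A) : EmbedsInPower.{u, v, max j r} P H A := by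
  obtain ⟨J, g, hg⟩ := h
  let e : (J → H) ≃ₐ[P] (ULift.{r} J → H) :=
    (AlgEquiv.piCongrLeft P (fun _ => H) Equiv.ulift).symm
  exact ⟨ULift.{r} J, e.toAlgHom.comp g, e.injective.comp hg⟩

theorem EmbedsInPower.of_injective {A B : Type*} [CommRing A] [Algebra P A]
    [CommRing B] [Algebra P B] (h : EmbedsInPower.{u, v, j} P H B) (f : A →ₐ[P] B)
    (hf : Function.Injective f) : EmbedsInPower.{u, v, j} P H A := by
  obtain ⟨J, g, hg⟩ := h
  exact ⟨J, g.comp f, hg.comp hf⟩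

theorem memLSC_iff_embedsInPower {B : Type (max u v w)} [CommRing B] [Algebra P B]
    [Algebra.FiniteType P B] :
    MemLSC.{u, v, w} P H B ↔ EmbedsInPower.{u, v, max u v w} P H B := by
  refine ⟨fun h => ?_, fun h S _ => h.of_injective S.val Subtype.val_injective⟩
  exact EmbedsInPower.of_injective (h ⊤ Algebra.FiniteType.out)
    Subalgebra.topEquiv.symm.toAlgHom Subalgebra.topEquiv.symm.injective

end EmbedsInPower

section hClosure

variable {P : Type u} [Field P] {H : Type v} [CommRing H] [Algebra P H] {n : ℕ}

theorem subset_hClosure (T : Set (MvPolynomial (Fin n) P)) : T ⊆ hClosure P H n T :=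
  fun _ hf _ hμ => hμ _ hf

theorem hClosure_mono {T T' : Set (MvPolynomial (Fin n) P)} (h : T ⊆ T') :
    hClosure P H n T ⊆ hClosure P H n T' :=
  fun _ hf μ hμ => hf μ fun g hg => hμ g (h hg)

variable (H n) in
noncomputable def evalOnZeros (T : Set (MvPolynomial (Fin n) P)) :
    MvPolynomial (Fin n) P →ₐ[P] ({μ : Fin n → H // ∀ g ∈ T, aeval μ g = 0} → H) :=
  AlgHom.pi fun μ => aeval μ.1

theorem coe_ker_evalOnZeros (T : Set (MvPolynomial (Fin n) P)) :
    (RingHom.ker (evalOnZeros H n T) : Set (MvPolynomial (Fin n) P)) = hClosure P H n T := by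
  ext f
  exact ⟨fun h μ hμ => congrFun h ⟨μ, hμ⟩, fun h => funext fun μ => h μ.1 μ.2⟩

theorem hClosure_ker_subset_of_injective {A : Type*} [CommRing A] [Algebra P A]
    (π : MvPolynomial (Fin n) P →ₐ[P] A) {J : Type*} (e : A →ₐ[P] (J → H))
    (he : Function.Injective e) :
    hClosure P H n (RingHom.ker π) ⊆ RingHom.ker π := by
  intro f hf
  -- each coordinate of `e ∘ π` is evaluation at an `H`-point of the zero set of `ker π`
  have hcoord (i : J) (q : MvPolynomial (Fin n) P) :
      e (π q) i = aeval (fun k => e (π (X k)) i) q :=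
    congr($(aeval_unique ((Pi.evalAlgHom P (fun _ => H) i).comp (e.comp π))) q)
  have hzero : e (π f) = 0 := funext fun i => by
    rw [hcoord]
    exact hf _ fun g hg => by rw [← hcoord, (RingHom.mem_ker).1 hg, map_zero, Pi.zero_apply]
  exact (RingHom.mem_ker).2 (he (hzero.trans (map_zero e).symm))

theorem embedsInPower_iff_hClosure_ker_subset {A : Type*} [CommRing A] [Algebra P A]
    {π : MvPolynomial (Fin n) P →ₐ[P] A} (hπ : Function.Surjective π) :
    EmbedsInPower.{u, v, max v j} P H A ↔ hClosure P H n (RingHom.ker π) ⊆ RingHom.ker π := by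
  refine ⟨fun ⟨_, e, he⟩ => hClosure_ker_subset_of_injective π e he, fun h => ?_⟩
  let Φ := evalOnZeros H n (RingHom.ker π : Set (MvPolynomial (Fin n) P))
  have hker : RingHom.ker π = RingHom.ker Φ := by
    apply SetLike.coe_injective
    rw [coe_ker_evalOnZeros]
    exact (subset_hClosure _).antisymm h
  let e : A ≃ₐ[P] MvPolynomial (Fin n) P ⧸ RingHom.ker Φ :=
    (Ideal.quotientKerAlgEquivOfSurjective hπ).symm.trans (Ideal.quotientEquivAlgOfEq P hker)
  exact EmbedsInPower.ulift ⟨_, (Ideal.kerLiftAlg Φ).comp e.toAlgHom,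
    (Ideal.kerLiftAlg_injective Φ).comp e.injective⟩

end hClosure

variable {P : Type u} [Field P] {H₁ : Type v} [CommRing H₁] [Algebra P H₁]
  {H₂ : Type w} [CommRing H₂] [Algebra P H₂]

theorem GeomEquiv.memLSC_iff (h : GeomEquiv P H₁ H₂) (B : Type (max u v w)) [CommRing B]
    [Algebra P B] : MemLSC.{u, v, w} P H₁ B ↔ MemLSC.{u, w, v} P H₂ B := by
  refine forall₂_congr fun S hS => ?_
  have : Algebra.FiniteType P S := S.fg_iff_finiteType.1 hS
  obtain ⟨n, π, hπ⟩ := Algebra.FiniteType.iff_quotient_mvPolynomial''.1 this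
  exact (embedsInPower_iff_hClosure_ker_subset.{u, v, max u w} hπ).trans <| h n _ ▸
    (embedsInPower_iff_hClosure_ker_subset.{u, w, max u v} hπ).symm

theorem hClosure_subset_of_forall_memLSC_imp
    (h : ∀ (B : Type (max u v w)) [CommRing B] [Algebra P B],
      MemLSC.{u, w, v} P H₂ B → MemLSC.{u, v, w} P H₁ B)
    (n : ℕ) (T : Set (MvPolynomial (Fin n) P)) :
    hClosure P H₁ n T ⊆ hClosure P H₂ n T := by
  let Φ := evalOnZeros H₂ n T
  let B := ULift.{max u v} Φ.range
  let d : B ≃ₐ[P] Φ.range := ULift.algEquiv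
  have : Algebra.FiniteType P B := .of_surjective (d.symm.toAlgHom.comp Φ.rangeRestrict)
    (d.symm.surjective.comp Φ.rangeRestrict_surjective)
  have hB₂ : EmbedsInPower.{u, w, max u v w} P H₂ B :=
    EmbedsInPower.ulift.{u, w, w} ⟨_, Φ.range.val.comp d.toAlgHom,
      Subtype.val_injective.comp d.injective⟩
  obtain ⟨J, e, he⟩ := memLSC_iff_embedsInPower.1 (h B (memLSC_iff_embedsInPower.2 hB₂))
  have hclosed := hClosure_ker_subset_of_injective Φ.rangeRestrict
    (e.comp d.symm.toAlgHom) (he.comp d.symm.injective)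
  rw [AlgHom.ker_rangeRestrict, coe_ker_evalOnZeros] at hclosed
  exact (hClosure_mono (subset_hClosure T)).trans hclosed

/-- `H₁` and `H₂` are geometrically equivalent iff
`LSC(H₁) = LSC(H₂)`. -/
theorem geomEquiv_iff_LSC_eq (P : Type u) [Field P]
    (H₁ : Type v) [CommRing H₁] [Algebra P H₁]
    (H₂ : Type w) [CommRing H₂] [Algebra P H₂] :
    GeomEquiv P H₁ H₂
      ↔
    (∀ (B : Type (max u v w)) [CommRing B] [Algebra P B],
      MemLSC.{u, v, w} P H₁ B ↔ MemLSC.{u, w, v} P H₂ B) :=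
  ⟨fun h B _ _ => h.memLSC_iff B, fun h n T =>
    (hClosure_subset_of_forall_memLSC_imp (fun B _ _ => (h B).2) n T).antisymm
      (hClosure_subset_of_forall_memLSC_imp (fun B _ _ => (h B).1) n T)⟩
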